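/- arXiv:1906.03049 — 7 statements merged into one kernel-verified Lean document; each statement's English description precedes it below -/
import Mathlib

section
/- Let f_X and f_Y be strictly positive probability density functions on ℝ and let ε > 0. Then the smallest δ ∈ [0,1] such that for every measurable set S ⊆ ℝ both ∫_S f_X(t) dt ≤ e^ε ∫_S f_Y(t) dt + δ and ∫_S f_Y(t) dt ≤ e^ε ∫_S f_X(t) dt + δ hold is exactly δ(ε) = max{ ∫_ℝ max{f_X(t) − e^ε f_Y(t), 0} dt , ∫_ℝ max{f_Y(t) − e^ε f_X(t), 0} dt }. In particular, this δ(ε) satisfies both families of inequalities, and for δ' < δ(ε) at least one inequality fails for some measurable S. -/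
open MeasureTheory Real Set

/-!
The quantity `∫_S f - c ∫_S g = ∫_S (f - c g)` is maximised over measurable `S` by `S = {f > c g}`,
where it equals `∫ (f - c g)⁺`. Hence `∫ (f - c g)⁺` is the least `δ` with
`∫_S f ≤ c ∫_S g + δ` for all `S`. Taking `c = e^ε` for both orderings of the densities gives the
maximum of the two hockey-stick divergences, which lies in `[0, 1]` because `0 ≤ (f - c g)⁺ ≤ f`.
-/

section HockeyStick

variable {α : Type*} [MeasurableSpace α] {μ : Measure α} {f g : α → ℝ}

theorem setIntegral_pos_eq_integral_max_zero {h : α → ℝ} (hh : Measurable h) :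
    ∫ x in {x | 0 < h x}, h x ∂μ = ∫ x, max (h x) 0 ∂μ := by
  have hs : MeasurableSet {x | 0 < h x} := measurableSet_lt measurable_const hh
  calc ∫ x in {x | 0 < h x}, h x ∂μ = ∫ x in {x | 0 < h x}, max (h x) 0 ∂μ :=
        setIntegral_congr_fun hs fun x hx => (max_eq_left (le_of_lt hx)).symm
    _ = ∫ x, max (h x) 0 ∂μ :=
        setIntegral_eq_integral_of_forall_compl_eq_zero fun x hx =>
          max_eq_right (not_lt.mp hx)

theorem setIntegral_sub_mul (hf : Integrable f μ) (hg : Integrable g μ) (c : ℝ) (S : Set α) :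
    ∫ x in S, (f x - c * g x) ∂μ = ∫ x in S, f x ∂μ - c * ∫ x in S, g x ∂μ := by
  rw [integral_sub hf.integrableOn (hg.const_mul c).integrableOn, integral_const_mul]

theorem setIntegral_le_mul_setIntegral_add_integral_max_zero (hf : Integrable f μ)
    (hg : Integrable g μ) (c : ℝ) (S : Set α) :
    ∫ x in S, f x ∂μ ≤ c * ∫ x in S, g x ∂μ + ∫ x, max (f x - c * g x) 0 ∂μ := by
  have hpos : Integrable (fun x => max (f x - c * g x) 0) μ := (hf.sub (hg.const_mul c)).pos_part
  have hle : ∫ x in S, (f x - c * g x) ∂μ ≤ ∫ x, max (f x - c * g x) 0 ∂μ :=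
    calc ∫ x in S, (f x - c * g x) ∂μ ≤ ∫ x in S, max (f x - c * g x) 0 ∂μ :=
          setIntegral_mono (hf.sub (hg.const_mul c)).integrableOn hpos.integrableOn
            fun x => le_max_left _ _
      _ ≤ ∫ x, max (f x - c * g x) 0 ∂μ :=
          setIntegral_le_integral hpos (.of_forall fun x => le_max_right _ _)
  rw [setIntegral_sub_mul hf hg] at hle
  linarith

theorem isLeast_integral_max_sub_mul_zero (hfm : Measurable f) (hgm : Measurable g)
    (hf : Integrable f μ) (hg : Integrable g μ) (c : ℝ) :
    IsLeast {δ | ∀ S, MeasurableSet S → ∫ x in S, f x ∂μ ≤ c * ∫ x in S, g x ∂μ + δ}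
      (∫ x, max (f x - c * g x) 0 ∂μ) := by
  refine ⟨fun S _ => setIntegral_le_mul_setIntegral_add_integral_max_zero hf hg c S,
    fun δ hδ => ?_⟩
  have hm : Measurable fun x => f x - c * g x := by fun_prop
  rw [← setIntegral_pos_eq_integral_max_zero hm, setIntegral_sub_mul hf hg]
  have hS : MeasurableSet {x | 0 < f x - c * g x} := measurableSet_lt measurable_const hm
  linarith [hδ _ hS]

theorem integral_max_sub_mul_zero_le (hf : Integrable f μ) (hg : Integrable g μ)
    (hf0 : 0 ≤ f) (hg0 : 0 ≤ g) {c : ℝ} (hc : 0 ≤ c) :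
    ∫ x, max (f x - c * g x) 0 ∂μ ≤ ∫ x, f x ∂μ :=
  integral_mono (hf.sub (hg.const_mul c)).pos_part hf fun x =>
    max_le (by linarith [mul_nonneg hc (hg0 x)]) (hf0 x)

end HockeyStick

theorem tight_delta_eps_general
    (fX fY : ℝ → ℝ)
    (hfXm : Measurable fX) (hfYm : Measurable fY)
    (hfXpos : ∀ t, 0 < fX t) (hfYpos : ∀ t, 0 < fY t)
    (hfXi : Integrable fX) (hfYi : Integrable fY)
    (hfX1 : (∫ t, fX t) = 1) (hfY1 : (∫ t, fY t) = 1)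
    (ε : ℝ) :
    IsLeast
      {δ : ℝ | δ ∈ Set.Icc (0 : ℝ) 1 ∧ ∀ S : Set ℝ, MeasurableSet S →
        (∫ t in S, fX t) ≤ Real.exp ε * (∫ t in S, fY t) + δ ∧
        (∫ t in S, fY t) ≤ Real.exp ε * (∫ t in S, fX t) + δ}
      (max (∫ t, max (fX t - Real.exp ε * fY t) 0)
           (∫ t, max (fY t - Real.exp ε * fX t) 0)) := by
  obtain ⟨hXY, hXY_least⟩ := isLeast_integral_max_sub_mul_zero hfXm hfYm hfXi hfYi (exp ε)
  obtain ⟨hYX, hYX_least⟩ := isLeast_integral_max_sub_mul_zero hfYm hfXm hfYi hfXi (exp ε)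
  have hXY_le_one := hfX1 ▸ integral_max_sub_mul_zero_le hfXi hfYi
    (fun t => (hfXpos t).le) (fun t => (hfYpos t).le) (exp_pos ε).le
  have hYX_le_one := hfY1 ▸ integral_max_sub_mul_zero_le hfYi hfXi
    (fun t => (hfYpos t).le) (fun t => (hfXpos t).le) (exp_pos ε).le
  set A := ∫ t, max (fX t - exp ε * fY t) 0
  set B := ∫ t, max (fY t - exp ε * fX t) 0
  refine ⟨⟨⟨le_max_of_le_left (integral_nonneg fun t => le_max_right _ _),
      max_le hXY_le_one hYX_le_one⟩, fun S hS => ?_⟩, ?_⟩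
  · exact ⟨by linarith [hXY S hS, le_max_left A B], by linarith [hYX S hS, le_max_right A B]⟩
  · rintro δ ⟨-, hδ⟩
    exact max_le (hXY_least fun S hS => (hδ S hS).1) (hYX_least fun S hS => (hδ S hS).2)

/-- For strictly positive densities `fX`, `fY` on ℝ and `ε > 0`, the smallest
`δ ∈ [0,1]` such that for every measurable `S` both DP inequalities hold is exactly
`max (∫ max (fX - e^ε fY) 0) (∫ max (fY - e^ε fX) 0)`. -/
theorem tight_delta_eps
    (fX fY : ℝ → ℝ)
    (hfXm : Measurable fX) (hfYm : Measurable fY)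
    (hfXpos : ∀ t, 0 < fX t) (hfYpos : ∀ t, 0 < fY t)
    (hfXi : Integrable fX) (hfYi : Integrable fY)
    (hfX1 : (∫ t, fX t) = 1) (hfY1 : (∫ t, fY t) = 1)
    (ε : ℝ) (hε : 0 < ε) :
    IsLeast
      {δ : ℝ | δ ∈ Set.Icc (0 : ℝ) 1 ∧ ∀ S : Set ℝ, MeasurableSet S →
        (∫ t in S, fX t) ≤ Real.exp ε * (∫ t in S, fY t) + δ ∧
        (∫ t in S, fY t) ≤ Real.exp ε * (∫ t in S, fX t) + δ}
      (max (∫ t, max (fX t - Real.exp ε * fY t) 0)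
           (∫ t, max (fY t - Real.exp ε * fX t) 0)) :=
  tight_delta_eps_general fX fY hfXm hfYm hfXpos hfYpos hfXi hfYi hfX1 hfY1 ε
end

section
/- Let (f_X, f_Y) and (f_{X'}, f_{Y'}) be two pairs of densities each satisfying the privacy loss distribution assumptions, with privacy loss functions L_{X/Y}, L_{X'/Y'} and PLD densities ω_{X/Y}, ω_{X'/Y'}. Then for every measurable set S ⊆ ℝ, ∬_{{(t₁,t₂) ∈ ℝ² : L_{X/Y}(t₁) + L_{X'/Y'}(t₂) ∈ S}} f_X(t₁) f_{X'}(t₂) dt₁ dt₂ = ∫_S (ω_{X/Y} * ω_{X'/Y'})(t) dt, where (ω_{X/Y} * ω_{X'/Y'})(t) = ∫_ℝ ω_{X/Y}(u) ω_{X'/Y'}(t − u) du. That is, the privacy loss distribution of the composition of the two mechanisms is the convolution of their individual privacy loss distributions. -/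
/-!
Each privacy loss function `L` pushes the measure `f_X dt` forward to `ω dt`: this is the change
of variables `s = L t`, where `|(L⁻¹)'| = (L⁻¹)'` because `L⁻¹` is increasing. By Fubini, applied
to the test function `g = 1_S`, the mass of `{L₁ t₁ + L₂ t₂ ∈ S}` becomes
`∫∫ ω₁ u ω₂ v g (u + v)`, and the shear `(u, v) ↦ (u, u + v)` turns this into `∫_S ω₁ * ω₂`.
-/

open MeasureTheory Real Set

/-- Convolution of two real functions. -/
noncomputable def conv (h₁ h₂ : ℝ → ℝ) : ℝ → ℝ := fun x => ∫ t, h₁ t * h₂ (x - t)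

open Function Filter

noncomputable def pldDensity (f Linv Linv' : ℝ → ℝ) (D : Set ℝ) : ℝ → ℝ :=
  D.indicator fun s => f (Linv s) * Linv' s

theorem Function.LeftInverse.image_range_eq_univ {α β : Type*} {f : α → β} {g : β → α}
    (h : LeftInverse g f) : g '' range f = univ := by
  rw [← range_comp, h.comp_eq_id, range_id]

section ChangeOfVariables

variable {L Linv Linv' : ℝ → ℝ}

theorem StrictMono.hasDerivAt_leftInverse_nonneg (hmono : StrictMono L)
    (hLinv : LeftInverse Linv L) (hopen : IsOpen (range L)) {s : ℝ} (hs : s ∈ range L)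
    (hderiv : HasDerivAt Linv (Linv' s) s) : 0 ≤ Linv' s := by
  have hmonoOn : MonotoneOn Linv (range L) := by
    rintro _ ⟨x, rfl⟩ _ ⟨y, rfl⟩ hxy
    rw [hLinv x, hLinv y]
    exact hmono.le_iff_le.mp hxy
  have hacc : AccPt s (𝓟 (range L)) := by
    simpa using (PerfectSpace.univ_preperfect s (mem_univ s)).nhds_inter (hopen.mem_nhds hs)
  exact hderiv.hasDerivWithinAt.nonneg_of_monotoneOn hacc hmonoOn

theorem integral_mul_comp_eq_integral_pldDensity_mul (hmono : StrictMono L)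
    (hLinv : LeftInverse Linv L) (hopen : IsOpen (range L))
    (hderiv : ∀ s ∈ range L, HasDerivAt Linv (Linv' s) s) (f g : ℝ → ℝ) :
    ∫ x, f x * g (L x) = ∫ s, pldDensity f Linv Linv' (range L) s * g s := by
  calc ∫ x, f x * g (L x)
      = ∫ x in Linv '' range L, f x * g (L x) := by
        rw [hLinv.image_range_eq_univ, setIntegral_univ]
    _ = ∫ s in range L, |Linv' s| • (f (Linv s) * g (L (Linv s))) :=
        integral_image_eq_integral_abs_deriv_smul hopen.measurableSet
          (fun s hs => (hderiv s hs).hasDerivWithinAt) hLinv.rightInvOn_range.injOn _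
    _ = ∫ s in range L, f (Linv s) * Linv' s * g s := by
        refine setIntegral_congr_fun hopen.measurableSet fun s hs => ?_
        rw [abs_of_nonneg (hmono.hasDerivAt_leftInverse_nonneg hLinv hopen hs (hderiv s hs)),
          hLinv.rightInvOn_range hs, smul_eq_mul]
        ring
    _ = ∫ s, pldDensity f Linv Linv' (range L) s * g s := by
        rw [← integral_indicator hopen.measurableSet]
        simp only [pldDensity, indicator_mul_left]

theorem integrable_pldDensity (hmono : StrictMono L)
    (hLinv : LeftInverse Linv L) (hopen : IsOpen (range L))
    (hderiv : ∀ s ∈ range L, HasDerivAt Linv (Linv' s) s) {f : ℝ → ℝ} (hf : Integrable f) :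
    Integrable (pldDensity f Linv Linv' (range L)) := by
  have h : IntegrableOn f (Linv '' range L) := by
    rw [hLinv.image_range_eq_univ]
    exact hf.integrableOn
  rw [integrableOn_image_iff_integrableOn_abs_deriv_smul hopen.measurableSet
    (fun s hs => (hderiv s hs).hasDerivWithinAt) hLinv.rightInvOn_range.injOn] at h
  refine (h.congr_fun (fun s hs => ?_) hopen.measurableSet).integrable_indicator
    hopen.measurableSet
  rw [abs_of_nonneg (hmono.hasDerivAt_leftInverse_nonneg hLinv hopen hs (hderiv s hs)),
    smul_eq_mul, mul_comm]

end ChangeOfVariables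

theorem integral_prod_mul_mul_of_norm_le {𝕜 α β : Type*} [RCLike 𝕜]
    [MeasurableSpace α] [MeasurableSpace β] {μ : Measure α} {ν : Measure β}
    [SFinite μ] [SFinite ν]
    {f : α → 𝕜} {g : β → 𝕜} {h : α × β → 𝕜} {C : ℝ} (hf : Integrable f μ)
    (hg : Integrable g ν) (hh : AEStronglyMeasurable h (μ.prod ν)) (hC : ∀ p, ‖h p‖ ≤ C) :
    ∫ p, f p.1 * g p.2 * h p ∂(μ.prod ν) = ∫ x, f x * ∫ y, g y * h (x, y) ∂ν ∂μ := by
  rw [integral_prod _ ((hf.mul_prod hg).mul_bdd hh (ae_of_all _ hC))]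
  simp only [mul_assoc, integral_const_mul]

theorem integral_mul_integral_mul_comp_add_eq_integral_conv_mul {ω₁ ω₂ g : ℝ → ℝ} {C : ℝ}
    (h₁ : Integrable ω₁) (h₂ : Integrable ω₂) (hg : Measurable g) (hC : ∀ t, ‖g t‖ ≤ C) :
    ∫ u, ω₁ u * ∫ v, ω₂ v * g (u + v) = ∫ t, conv ω₁ ω₂ t * g t := by
  have hshear := measurePreserving_prod_sub (volume : Measure ℝ) volume
  have hemb := (MeasurableEquiv.shearSubRight ℝ).measurableEmbedding
  have hint : Integrable (fun p : ℝ × ℝ => ω₁ p.1 * ω₂ p.2 * g (p.1 + p.2))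
      (volume.prod volume) :=
    (h₁.mul_prod h₂).mul_bdd (hg.comp measurable_add).aestronglyMeasurable
      (ae_of_all _ fun _ => hC _)
  calc ∫ u, ω₁ u * ∫ v, ω₂ v * g (u + v)
      = ∫ p : ℝ × ℝ, ω₁ p.1 * ω₂ p.2 * g (p.1 + p.2) ∂(volume.prod volume) :=
        (integral_prod_mul_mul_of_norm_le h₁ h₂
          (hg.comp measurable_add).aestronglyMeasurable fun _ => hC _).symm
    _ = ∫ p : ℝ × ℝ, ω₁ p.1 * ω₂ (p.2 - p.1) * g p.2 ∂(volume.prod volume) := by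
        rw [← hshear.integral_comp hemb]
        simp
    _ = ∫ t, conv ω₁ ω₂ t * g t := by
        have hint' : Integrable (fun p : ℝ × ℝ => ω₁ p.1 * ω₂ (p.2 - p.1) * g p.2)
            (volume.prod volume) := by
          simpa [comp_def] using (hshear.integrable_comp_emb hemb).2 hint
        rw [integral_prod_symm _ hint']
        simp only [conv, integral_mul_const]

theorem integral_prod_mul_comp_add_eq_integral_conv_pldDensity_mul
    {f₁ f₂ L₁ L₂ L₁inv L₂inv L₁inv' L₂inv' g : ℝ → ℝ} {C : ℝ}
    (hmono₁ : StrictMono L₁) (hinv₁ : LeftInverse L₁inv L₁) (hopen₁ : IsOpen (range L₁))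
    (hderiv₁ : ∀ s ∈ range L₁, HasDerivAt L₁inv (L₁inv' s) s)
    (hmono₂ : StrictMono L₂) (hinv₂ : LeftInverse L₂inv L₂) (hopen₂ : IsOpen (range L₂))
    (hderiv₂ : ∀ s ∈ range L₂, HasDerivAt L₂inv (L₂inv' s) s)
    (hf₁ : Integrable f₁) (hf₂ : Integrable f₂) (hg : Measurable g) (hC : ∀ t, ‖g t‖ ≤ C) :
    ∫ p : ℝ × ℝ, f₁ p.1 * f₂ p.2 * g (L₁ p.1 + L₂ p.2)
      = ∫ t, conv (pldDensity f₁ L₁inv L₁inv' (range L₁))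
          (pldDensity f₂ L₂inv L₂inv' (range L₂)) t * g t := by
  set ω₁ := pldDensity f₁ L₁inv L₁inv' (range L₁)
  set ω₂ := pldDensity f₂ L₂inv L₂inv' (range L₂)
  have hL : Measurable fun p : ℝ × ℝ => L₁ p.1 + L₂ p.2 :=
    (hmono₁.monotone.measurable.comp measurable_fst).add
      (hmono₂.monotone.measurable.comp measurable_snd)
  have inner (u : ℝ) : ∫ y, f₂ y * g (u + L₂ y) = ∫ v, ω₂ v * g (u + v) :=
    integral_mul_comp_eq_integral_pldDensity_mul hmono₂ hinv₂ hopen₂ hderiv₂ f₂ (g <| u + ·)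
  calc ∫ p : ℝ × ℝ, f₁ p.1 * f₂ p.2 * g (L₁ p.1 + L₂ p.2)
      = ∫ x, f₁ x * ∫ y, f₂ y * g (L₁ x + L₂ y) := by
        rw [Measure.volume_eq_prod]
        exact integral_prod_mul_mul_of_norm_le hf₁ hf₂
          (hg.comp hL).aestronglyMeasurable fun _ => hC _
    _ = ∫ u, ω₁ u * ∫ v, ω₂ v * g (u + v) := by
        simp only [inner]
        exact integral_mul_comp_eq_integral_pldDensity_mul hmono₁ hinv₁ hopen₁ hderiv₁ f₁
          fun u => ∫ v, ω₂ v * g (u + v)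
    _ = ∫ t, conv ω₁ ω₂ t * g t :=
        integral_mul_integral_mul_comp_add_eq_integral_conv_mul
          (integrable_pldDensity hmono₁ hinv₁ hopen₁ hderiv₁ hf₁)
          (integrable_pldDensity hmono₂ hinv₂ hopen₂ hderiv₂ hf₂) hg hC

theorem pld_composition_convolution_general
    (fX fY fX2 fY2 : ℝ → ℝ) (D D2 : Set ℝ) (Linv Linv' L2inv L2inv' : ℝ → ℝ)
    (hfXi : Integrable fX) (hfX2i : Integrable fX2)
    -- pair 1: `L_{X/Y}` is a strictly increasing C¹ bijection onto the open interval `D`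
    (hD : IsOpen D)
    (hrange : Set.range (fun t => Real.log (fX t / fY t)) = D)
    (hmono : StrictMono (fun t => Real.log (fX t / fY t)))
    (hLinv : ∀ t, Linv (Real.log (fX t / fY t)) = t)
    (hLinvD : ∀ s ∈ D, HasDerivAt Linv (Linv' s) s)
    -- pair 2: `L_{X'/Y'}` is a strictly increasing C¹ bijection onto the open interval `D2`
    (hD2 : IsOpen D2)
    (hrange2 : Set.range (fun t => Real.log (fX2 t / fY2 t)) = D2)
    (hmono2 : StrictMono (fun t => Real.log (fX2 t / fY2 t)))
    (hL2inv : ∀ t, L2inv (Real.log (fX2 t / fY2 t)) = t)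
    (hL2invD : ∀ s ∈ D2, HasDerivAt L2inv (L2inv' s) s) :
    ∀ S : Set ℝ, MeasurableSet S →
      (∫ p : ℝ × ℝ in
          {p : ℝ × ℝ | Real.log (fX p.1 / fY p.1) + Real.log (fX2 p.2 / fY2 p.2) ∈ S},
        fX p.1 * fX2 p.2)
      = ∫ t in S,
          conv (D.indicator (fun u => fX (Linv u) * Linv' u))
               (D2.indicator (fun u => fX2 (L2inv u) * L2inv' u)) t := by
  intro S hS
  subst hrange hrange2
  have hpreimage : MeasurableSet
      {p : ℝ × ℝ | Real.log (fX p.1 / fY p.1) + Real.log (fX2 p.2 / fY2 p.2) ∈ S} :=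
    ((hmono.monotone.measurable.comp measurable_fst).add
      (hmono2.monotone.measurable.comp measurable_snd)) hS
  have hbound (t : ℝ) : ‖S.indicator (1 : ℝ → ℝ) t‖ ≤ 1 := by
    simpa using norm_indicator_le_norm_self (s := S) (f := (1 : ℝ → ℝ)) (a := t)
  rw [← integral_indicator hpreimage, ← integral_indicator hS]
  convert integral_prod_mul_comp_add_eq_integral_conv_pldDensity_mul hmono hLinv hD hLinvD
    hmono2 hL2inv hD2 hL2invD hfXi hfX2i (measurable_one.indicator hS) hbound using 1
  · refine integral_congr_ae (.of_eq (funext fun p => ?_))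
    by_cases hp : Real.log (fX p.1 / fY p.1) + Real.log (fX2 p.2 / fY2 p.2) ∈ S <;> simp [hp]
  · refine integral_congr_ae (.of_eq (funext fun t => ?_))
    by_cases ht : t ∈ S <;> simp [ht, pldDensity]

/-- The privacy loss distribution of the composition of two mechanisms is the
convolution of their individual privacy loss distributions: for every measurable `S`,
the mass that the pair of privacy loss functions assigns to `S` equals `∫_S ω₁ * ω₂`. -/
theorem pld_composition_convolution
    (fX fY fX2 fY2 : ℝ → ℝ) (D D2 : Set ℝ) (Linv Linv' L2inv L2inv' : ℝ → ℝ)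
    (hfXm : Measurable fX) (hfYm : Measurable fY)
    (hfX2m : Measurable fX2) (hfY2m : Measurable fY2)
    (hfXpos : ∀ t, 0 < fX t) (hfYpos : ∀ t, 0 < fY t)
    (hfX2pos : ∀ t, 0 < fX2 t) (hfY2pos : ∀ t, 0 < fY2 t)
    (hfXi : Integrable fX) (hfYi : Integrable fY)
    (hfX2i : Integrable fX2) (hfY2i : Integrable fY2)
    (hfX1 : (∫ t, fX t) = 1) (hfY1 : (∫ t, fY t) = 1)
    (hfX21 : (∫ t, fX2 t) = 1) (hfY21 : (∫ t, fY2 t) = 1)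
    -- pair 1: `L_{X/Y}` is a strictly increasing C¹ bijection onto the open interval `D`
    (hD : IsOpen D) (hDconn : D.OrdConnected)
    (hrange : Set.range (fun t => Real.log (fX t / fY t)) = D)
    (hmono : StrictMono (fun t => Real.log (fX t / fY t)))
    (hsmooth : ContDiff ℝ 1 (fun t => Real.log (fX t / fY t)))
    (hLinv : ∀ t, Linv (Real.log (fX t / fY t)) = t)
    (hLinvD : ∀ s ∈ D, HasDerivAt Linv (Linv' s) s)
    -- pair 2: `L_{X'/Y'}` is a strictly increasing C¹ bijection onto the open interval `D2`
    (hD2 : IsOpen D2) (hD2conn : D2.OrdConnected)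
    (hrange2 : Set.range (fun t => Real.log (fX2 t / fY2 t)) = D2)
    (hmono2 : StrictMono (fun t => Real.log (fX2 t / fY2 t)))
    (hsmooth2 : ContDiff ℝ 1 (fun t => Real.log (fX2 t / fY2 t)))
    (hL2inv : ∀ t, L2inv (Real.log (fX2 t / fY2 t)) = t)
    (hL2invD : ∀ s ∈ D2, HasDerivAt L2inv (L2inv' s) s) :
    ∀ S : Set ℝ, MeasurableSet S →
      (∫ p : ℝ × ℝ in
          {p : ℝ × ℝ | Real.log (fX p.1 / fY p.1) + Real.log (fX2 p.2 / fY2 p.2) ∈ S},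
        fX p.1 * fX2 p.2)
      = ∫ t in S,
          conv (D.indicator (fun u => fX (Linv u) * Linv' u))
               (D2.indicator (fun u => fX2 (L2inv u) * L2inv' u)) t :=
  pld_composition_convolution_general fX fY fX2 fY2 D D2 Linv Linv' L2inv L2inv' hfXi hfX2i hD
    hrange hmono hLinv hLinvD hD2 hrange2 hmono2 hL2inv hL2invD
end

section
/- Let σ > 0 and 0 < q < 1, and define f_X(t) = q·(1/√(2πσ²))·e^{−(t−1)²/(2σ²)} + (1−q)·(1/√(2πσ²))·e^{−t²/(2σ²)} and f_Y(t) = (1/√(2πσ²))·e^{−t²/(2σ²)}. Then the privacy loss function L(t) = log(f_X(t)/f_Y(t)) satisfies L(t) = log( q·e^{(2t−1)/(2σ²)} + (1−q) ); L is a strictly increasing continuously differentiable bijection from ℝ onto the interval (log(1−q), ∞); its inverse is L^{-1}(s) = σ²·log( (e^s − (1−q))/q ) + 1/2; and the derivative of the inverse is (d/ds)L^{-1}(s) = σ²·e^s / (e^s − (1−q)) for s > log(1−q). -/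
open Real Set

/-- privacy loss function of the Poisson-subsampled Gaussian mechanism
(remove/add neighbouring relation): explicit formula, strict monotonicity, smoothness,
range `(log(1-q), ∞)`, explicit inverse and derivative of the inverse. -/
theorem poisson_subsampled_gaussian_pl
    (σ q : ℝ) (hσ : 0 < σ) (hq0 : 0 < q) (hq1 : q < 1)
    (fX fY L Linv : ℝ → ℝ)
    (hfX : fX = fun t =>
      q * (1 / Real.sqrt (2 * Real.pi * σ ^ 2)) * Real.exp (-(t - 1) ^ 2 / (2 * σ ^ 2)) +
      (1 - q) * (1 / Real.sqrt (2 * Real.pi * σ ^ 2)) * Real.exp (-t ^ 2 / (2 * σ ^ 2)))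
    (hfY : fY = fun t =>
      (1 / Real.sqrt (2 * Real.pi * σ ^ 2)) * Real.exp (-t ^ 2 / (2 * σ ^ 2)))
    (hL : L = fun t => Real.log (fX t / fY t))
    (hLinv : Linv = fun s => σ ^ 2 * Real.log ((Real.exp s - (1 - q)) / q) + 1 / 2) :
    (∀ t, L t = Real.log (q * Real.exp ((2 * t - 1) / (2 * σ ^ 2)) + (1 - q))) ∧
    StrictMono L ∧
    ContDiff ℝ 1 L ∧
    Set.range L = Set.Ioi (Real.log (1 - q)) ∧
    (∀ t, Linv (L t) = t) ∧
    (∀ s ∈ Set.Ioi (Real.log (1 - q)), L (Linv s) = s) ∧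
    (∀ s ∈ Set.Ioi (Real.log (1 - q)),
      HasDerivAt Linv (σ ^ 2 * Real.exp s / (Real.exp s - (1 - q))) s) := by
  have hσ2 : (0:ℝ) < 2 * σ ^ 2 := by positivity
  have hσ2' : (2 * σ ^ 2) ≠ 0 := ne_of_gt hσ2
  have hc : (0:ℝ) < 1 / Real.sqrt (2 * Real.pi * σ ^ 2) := by
    have h0 : (0:ℝ) < 2 * Real.pi * σ ^ 2 := by positivity
    positivity
  set g : ℝ → ℝ := fun t => q * Real.exp ((2 * t - 1) / (2 * σ ^ 2)) + (1 - q) with hg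
  have hgpos : ∀ t, 1 - q < g t := by
    intro t
    have := Real.exp_pos ((2 * t - 1) / (2 * σ ^ 2))
    simp only [hg]
    nlinarith
  have hq1' : 0 < 1 - q := by linarith
  have hgpos' : ∀ t, 0 < g t := fun t => lt_trans hq1' (hgpos t)
  -- formula
  have hratio : ∀ t, fX t / fY t = g t := by
    intro t
    subst hfX hfY
    simp only [hg]
    have h1 : -(t - 1) ^ 2 / (2 * σ ^ 2) = (2 * t - 1) / (2 * σ ^ 2) + -t ^ 2 / (2 * σ ^ 2) := by
      field_simp; ring
    rw [h1, Real.exp_add]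
    have hE := Real.exp_pos (-t ^ 2 / (2 * σ ^ 2))
    field_simp
  have hLg : L = fun t => Real.log (g t) := by
    funext t; simp only [hL]; rw [hratio t]
  have hform : ∀ t, L t = Real.log (q * Real.exp ((2 * t - 1) / (2 * σ ^ 2)) + (1 - q)) := by
    intro t; rw [hLg]
  -- strict mono
  have hmono : StrictMono L := by
    intro a b hab
    rw [hLg]
    apply Real.log_lt_log (hgpos' a)
    simp only [hg]
    have h : (2 * a - 1) / (2 * σ ^ 2) < (2 * b - 1) / (2 * σ ^ 2) :=
      (div_lt_div_iff_of_pos_right hσ2).mpr (by linarith)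
    have := Real.exp_lt_exp.mpr h
    nlinarith
  -- smoothness
  have hcd : ContDiff ℝ 1 L := by
    rw [hLg]
    apply ContDiff.log
    · apply ContDiff.add
      · apply ContDiff.mul contDiff_const
        apply Real.contDiff_exp.comp
        apply ContDiff.div_const
        exact (contDiff_const.mul contDiff_id).sub contDiff_const
      · exact contDiff_const
    · intro t; exact ne_of_gt (hgpos' t)
  -- left inverse
  have hleft : ∀ t, Linv (L t) = t := by
    intro t
    rw [hLg, hLinv]
    simp only
    rw [Real.exp_log (hgpos' t)]
    simp only [hg]
    rw [add_sub_cancel_right, mul_div_cancel_left₀ _ (ne_of_gt hq0), Real.log_exp]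
    field_simp
    ring
  -- right inverse
  have hright : ∀ s ∈ Set.Ioi (Real.log (1 - q)), L (Linv s) = s := by
    intro s hs
    have hes : 1 - q < Real.exp s := by
      have := Real.exp_lt_exp.mpr (Set.mem_Ioi.mp hs)
      rwa [Real.exp_log hq1'] at this
    have hA : 0 < (Real.exp s - (1 - q)) / q := div_pos (by linarith) hq0
    rw [hLg, hLinv]
    simp only [hg]
    have harg : (2 * (σ ^ 2 * Real.log ((Real.exp s - (1 - q)) / q) + 1 / 2) - 1) / (2 * σ ^ 2)
        = Real.log ((Real.exp s - (1 - q)) / q) := by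
      field_simp
      ring
    rw [harg, Real.exp_log hA]
    have h2 : q * ((Real.exp s - (1 - q)) / q) + (1 - q) = Real.exp s := by
      field_simp
      ring
    rw [h2, Real.log_exp]
  refine ⟨hform, hmono, hcd, ?_, hleft, hright, ?_⟩
  · -- range
    ext s
    simp only [Set.mem_range, Set.mem_Ioi]
    constructor
    · rintro ⟨t, rfl⟩
      rw [hLg]
      exact Real.log_lt_log hq1' (hgpos t)
    · intro hs
      exact ⟨Linv s, hright s hs⟩
  · -- derivative of the inverse
    intro s hs
    have hes : 1 - q < Real.exp s := by
      have := Real.exp_lt_exp.mpr (Set.mem_Ioi.mp hs)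
      rwa [Real.exp_log hq1'] at this
    have hne : (Real.exp s - (1 - q)) / q ≠ 0 := by
      apply ne_of_gt; exact div_pos (by linarith) hq0
    have h1 : HasDerivAt (fun s => (Real.exp s - (1 - q)) / q) (Real.exp s / q) s :=
      ((Real.hasDerivAt_exp s).sub_const (1 - q)).div_const q
    have h2 := h1.log hne
    have h3 := (h2.const_mul (σ ^ 2)).add_const (1 / 2)
    rw [hLinv]
    refine h3.congr_deriv ?_
    have hne2 : Real.exp s - (1 - q) ≠ 0 := by linarith
    rw [div_div_div_cancel_right₀ (ne_of_gt hq0), mul_div_assoc]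
end

section
/- Let σ > 0 and 0 < q < 1, set c = q·e^{−1/(2σ²)}, and define f_X(t) = q·(1/√(2πσ²))·e^{−(t−1)²/(2σ²)} + (1−q)·(1/√(2πσ²))·e^{−t²/(2σ²)} and f_Y(t) = q·(1/√(2πσ²))·e^{−(t+1)²/(2σ²)} + (1−q)·(1/√(2πσ²))·e^{−t²/(2σ²)}. Then the privacy loss function L(t) = log(f_X(t)/f_Y(t)) satisfies L(t) = log( (q·e^{(2t−1)/(2σ²)} + (1−q)) / (q·e^{(−2t−1)/(2σ²)} + (1−q)) ); L is a strictly increasing continuously differentiable bijection from ℝ onto ℝ; and its inverse is L^{-1}(s) = σ²·log( ( −(1−q)(1−e^s) + √( (1−q)²(1−e^s)² + 4c²e^s ) ) / (2c) ). -/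
open Real Set

/-- privacy loss function of the subsampled Gaussian mechanism under sampling
without replacement (substitution relation): explicit formula, strict monotonicity,
smoothness, bijectivity from ℝ onto ℝ, and explicit inverse. -/
theorem swor_subsampled_gaussian_pl
    (σ q : ℝ) (hσ : 0 < σ) (hq0 : 0 < q) (hq1 : q < 1)
    (c : ℝ) (hc : c = q * Real.exp (-1 / (2 * σ ^ 2)))
    (fX fY L Linv : ℝ → ℝ)
    (hfX : fX = fun t =>
      q * (1 / Real.sqrt (2 * Real.pi * σ ^ 2)) * Real.exp (-(t - 1) ^ 2 / (2 * σ ^ 2)) +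
      (1 - q) * (1 / Real.sqrt (2 * Real.pi * σ ^ 2)) * Real.exp (-t ^ 2 / (2 * σ ^ 2)))
    (hfY : fY = fun t =>
      q * (1 / Real.sqrt (2 * Real.pi * σ ^ 2)) * Real.exp (-(t + 1) ^ 2 / (2 * σ ^ 2)) +
      (1 - q) * (1 / Real.sqrt (2 * Real.pi * σ ^ 2)) * Real.exp (-t ^ 2 / (2 * σ ^ 2)))
    (hL : L = fun t => Real.log (fX t / fY t))
    (hLinv : Linv = fun s => σ ^ 2 * Real.log
      ((-(1 - q) * (1 - Real.exp s) +
        Real.sqrt ((1 - q) ^ 2 * (1 - Real.exp s) ^ 2 + 4 * c ^ 2 * Real.exp s)) / (2 * c))) :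
    (∀ t, L t = Real.log ((q * Real.exp ((2 * t - 1) / (2 * σ ^ 2)) + (1 - q)) /
                          (q * Real.exp ((-2 * t - 1) / (2 * σ ^ 2)) + (1 - q)))) ∧
    StrictMono L ∧
    ContDiff ℝ 1 L ∧
    Function.Bijective L ∧
    (∀ t, Linv (L t) = t) ∧
    (∀ s, L (Linv s) = s) := by
  have hσ2 : (0:ℝ) < 2 * σ ^ 2 := by positivity
  have hσ2' : (2 * σ ^ 2 : ℝ) ≠ 0 := ne_of_gt hσ2
  have hq1' : (0:ℝ) < 1 - q := by linarith
  have hcpos : 0 < c := by rw [hc]; positivity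
  -- positivity of numerator/denominator functions
  have hN : ∀ t : ℝ, 0 < q * Real.exp ((2 * t - 1) / (2 * σ ^ 2)) + (1 - q) := by
    intro t; positivity
  have hD : ∀ t : ℝ, 0 < q * Real.exp ((-2 * t - 1) / (2 * σ ^ 2)) + (1 - q) := by
    intro t; positivity
  -- key ratio formula
  have key : ∀ t : ℝ, fX t / fY t =
      (q * Real.exp ((2 * t - 1) / (2 * σ ^ 2)) + (1 - q)) /
      (q * Real.exp ((-2 * t - 1) / (2 * σ ^ 2)) + (1 - q)) := by
    intro t
    have h1 : -(t - 1) ^ 2 / (2 * σ ^ 2) = -t ^ 2 / (2 * σ ^ 2) + (2 * t - 1) / (2 * σ ^ 2) := by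
      field_simp; ring
    have h2 : -(t + 1) ^ 2 / (2 * σ ^ 2) = -t ^ 2 / (2 * σ ^ 2) + (-2 * t - 1) / (2 * σ ^ 2) := by
      field_simp; ring
    have hG : 0 < (1 / Real.sqrt (2 * Real.pi * σ ^ 2)) * Real.exp (-t ^ 2 / (2 * σ ^ 2)) := by
      have : 0 < Real.sqrt (2 * Real.pi * σ ^ 2) := Real.sqrt_pos.2 (by positivity)
      positivity
    have hXt : fX t = ((1 / Real.sqrt (2 * Real.pi * σ ^ 2)) * Real.exp (-t ^ 2 / (2 * σ ^ 2))) *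
        (q * Real.exp ((2 * t - 1) / (2 * σ ^ 2)) + (1 - q)) := by
      rw [hfX]; simp only; rw [h1, Real.exp_add]; ring
    have hYt : fY t = ((1 / Real.sqrt (2 * Real.pi * σ ^ 2)) * Real.exp (-t ^ 2 / (2 * σ ^ 2))) *
        (q * Real.exp ((-2 * t - 1) / (2 * σ ^ 2)) + (1 - q)) := by
      rw [hfY]; simp only; rw [h2, Real.exp_add]; ring
    rw [hXt, hYt, mul_div_mul_left _ _ (ne_of_gt hG)]
  have hL' : ∀ t, L t = Real.log ((q * Real.exp ((2 * t - 1) / (2 * σ ^ 2)) + (1 - q)) /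
      (q * Real.exp ((-2 * t - 1) / (2 * σ ^ 2)) + (1 - q))) := by
    intro t; rw [hL]; simp only; rw [key t]
  -- strict monotonicity
  have hmono : StrictMono L := by
    intro t1 t2 h
    rw [hL' t1, hL' t2]
    apply Real.log_lt_log (div_pos (hN t1) (hD t1))
    have h1 : q * Real.exp ((2 * t1 - 1) / (2 * σ ^ 2)) < q * Real.exp ((2 * t2 - 1) / (2 * σ ^ 2)) := by
      apply mul_lt_mul_of_pos_left _ hq0
      exact Real.exp_lt_exp.2 (by apply div_lt_div_of_pos_right _ hσ2; linarith)
    have h2 : q * Real.exp ((-2 * t2 - 1) / (2 * σ ^ 2)) < q * Real.exp ((-2 * t1 - 1) / (2 * σ ^ 2)) := by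
      apply mul_lt_mul_of_pos_left _ hq0
      exact Real.exp_lt_exp.2 (by apply div_lt_div_of_pos_right _ hσ2; linarith)
    exact div_lt_div₀ (by linarith) (by linarith) (le_of_lt (hN t2)) (hD t2)
  -- smoothness
  have hLfun : L = fun t => Real.log ((q * Real.exp ((2 * t - 1) / (2 * σ ^ 2)) + (1 - q)) /
      (q * Real.exp ((-2 * t - 1) / (2 * σ ^ 2)) + (1 - q))) := funext hL'
  have hsmooth : ContDiff ℝ 1 L := by
    rw [hLfun]
    apply ContDiff.log
    · apply ContDiff.div
      · exact (contDiff_const.mul (((contDiff_const.mul contDiff_id).sub contDiff_const).div_const _).exp).add contDiff_const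
      · exact (contDiff_const.mul (((contDiff_const.mul contDiff_id).sub contDiff_const).div_const _).exp).add contDiff_const
      · intro t; exact ne_of_gt (hD t)
    · intro t; exact ne_of_gt (div_pos (hN t) (hD t))
  -- right inverse
  have hright : ∀ s, L (Linv s) = s := by
    intro s
    obtain ⟨E, hEdef⟩ : ∃ E : ℝ, E = Real.exp s := ⟨_, rfl⟩
    have hE : 0 < E := hEdef ▸ Real.exp_pos s
    obtain ⟨b, hb⟩ : ∃ b : ℝ, b = (1 - q) * (1 - E) := ⟨_, rfl⟩
    have hdisc : (0:ℝ) ≤ b ^ 2 + 4 * c ^ 2 * E := by positivity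
    obtain ⟨R, hRdef⟩ : ∃ R : ℝ, R = Real.sqrt (b ^ 2 + 4 * c ^ 2 * E) := ⟨_, rfl⟩
    have hR2 : R ^ 2 = b ^ 2 + 4 * c ^ 2 * E := by rw [hRdef]; exact Real.sq_sqrt hdisc
    have hRb : b < R := by
      have h0 : (0:ℝ) < c ^ 2 * E := by positivity
      have h1 : Real.sqrt (b ^ 2) < Real.sqrt (b ^ 2 + 4 * c ^ 2 * E) :=
        Real.sqrt_lt_sqrt (sq_nonneg b) (by linarith)
      calc b ≤ |b| := le_abs_self b
        _ = Real.sqrt (b ^ 2) := (Real.sqrt_sq_eq_abs b).symm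
        _ < R := by rw [hRdef]; exact h1
    obtain ⟨u, hu⟩ : ∃ u : ℝ, u = (-b + R) / (2 * c) := ⟨_, rfl⟩
    have hupos : 0 < u := hu ▸ div_pos (by linarith) (by linarith)
    have h2cu : 2 * c * u = R - b := by
      rw [hu]; field_simp; ring
    have hquad : c * u ^ 2 + b * u - E * c = 0 := by
      have h4 : 4 * c * (c * u ^ 2 + b * u - E * c) = 4 * c * 0 := by
        linear_combination (2 * c * u + R + b) * h2cu + hR2
      exact mul_left_cancel₀ (by positivity : (4 * c : ℝ) ≠ 0) h4
    have hLinvs : Linv s = σ ^ 2 * Real.log u := by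
      rw [hLinv]
      simp only
      rw [← hEdef, hu, hRdef, hb,
        show (1 - q) ^ 2 * (1 - E) ^ 2 = ((1 - q) * (1 - E)) ^ 2 from by ring]
      ring_nf
    rw [hLinvs, hL' _]
    have e1 : (2 * (σ ^ 2 * Real.log u) - 1) / (2 * σ ^ 2) = Real.log u + (-1) / (2 * σ ^ 2) := by
      field_simp; ring
    have e2 : (-2 * (σ ^ 2 * Real.log u) - 1) / (2 * σ ^ 2) = -Real.log u + (-1) / (2 * σ ^ 2) := by
      field_simp; ring
    rw [e1, e2, Real.exp_add, Real.exp_add, Real.exp_log hupos, Real.exp_neg, Real.exp_log hupos]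
    have hxc : q * (u * Real.exp (-1 / (2 * σ ^ 2))) = c * u := by rw [hc]; ring
    have hyc : q * (u⁻¹ * Real.exp (-1 / (2 * σ ^ 2))) = c * u⁻¹ := by rw [hc]; ring
    rw [hxc, hyc]
    have hden : 0 < c * u⁻¹ + (1 - q) := by positivity
    have hratio : c * u + (1 - q) = E * (c * u⁻¹ + (1 - q)) := by
      have hune : u ≠ 0 := ne_of_gt hupos
      have hmul : u * (c * u + (1 - q)) = u * (E * (c * u⁻¹ + (1 - q))) := by
        have hr : u * (E * (c * u⁻¹ + (1 - q))) = E * c + E * (1 - q) * u := by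
          field_simp
        rw [hr]; linear_combination hquad - u * hb
      exact mul_left_cancel₀ hune hmul
    rw [hratio, mul_div_assoc, div_self (ne_of_gt hden), mul_one, hEdef, Real.log_exp]
  have hinj : Function.Injective L := hmono.injective
  have hleft : ∀ t, Linv (L t) = t := fun t => hinj (hright (L t))
  exact ⟨hL', hmono, hsmooth, ⟨hinj, fun s => ⟨Linv s, hright s⟩⟩, hleft, hright⟩
end

section
/- Let g : ℝ → ℝ be a continuous function such that for all ε in an open interval I, both g and s ↦ e^{−s}·g(s) are integrable on (ε, ∞). Define φ(ε) = ∫_ε^∞ (1 − e^{ε−s})·g(s) ds. Then φ is differentiable on I with φ'(ε) = −∫_ε^∞ e^{ε−s}·g(s) ds. -/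
open MeasureTheory Real Set

lemma ioi_split (f : ℝ → ℝ) (hf : Continuous f) {a b : ℝ}
    (ha : IntegrableOn f (Set.Ioi a)) (hb : IntegrableOn f (Set.Ioi b)) :
    (∫ s in Set.Ioi b, f s) = (∫ s in Set.Ioi a, f s) - ∫ t in a..b, f t := by
  rcases le_total a b with h | h
  · rw [intervalIntegral.integral_of_le h]
    have key : (∫ s in Set.Ioi a, f s)
        = (∫ s in Set.Ioc a b, f s) + ∫ s in Set.Ioi b, f s := by
      rw [← setIntegral_union (Set.Ioc_disjoint_Ioi le_rfl) measurableSet_Ioi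
        (hf.integrableOn_Ioc) hb, Set.Ioc_union_Ioi_eq_Ioi h]
    linarith
  · rw [intervalIntegral.integral_symm, intervalIntegral.integral_of_le h]
    have key : (∫ s in Set.Ioi b, f s)
        = (∫ s in Set.Ioc b a, f s) + ∫ s in Set.Ioi a, f s := by
      rw [← setIntegral_union (Set.Ioc_disjoint_Ioi le_rfl) measurableSet_Ioi
        (hf.integrableOn_Ioc) ha, Set.Ioc_union_Ioi_eq_Ioi h]
    linarith

/-- differentiation of `φ(ε) = ∫_ε^∞ (1 − e^{ε−s}) g(s) ds`:
for continuous `g` with the stated integrability on an open interval `I`,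
`φ'(ε) = −∫_ε^∞ e^{ε−s} g(s) ds` for every `ε ∈ I`. -/
theorem deriv_delta_eps
    (g : ℝ → ℝ) (hg : Continuous g)
    (I : Set ℝ) (hI : IsOpen I) (hIconn : I.OrdConnected)
    (hint1 : ∀ ε ∈ I, IntegrableOn g (Set.Ioi ε))
    (hint2 : ∀ ε ∈ I, IntegrableOn (fun s => Real.exp (-s) * g s) (Set.Ioi ε)) :
    ∀ ε ∈ I,
      HasDerivAt (fun e => ∫ s in Set.Ioi e, (1 - Real.exp (e - s)) * g s)
        (-∫ s in Set.Ioi ε, Real.exp (ε - s) * g s) ε := by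
  intro ε hε
  have hgc2 : Continuous (fun s => Real.exp (-s) * g s) :=
    ((Real.continuous_exp.comp continuous_neg).mul hg)
  set A : ℝ → ℝ := fun e => ∫ s in Set.Ioi e, g s with hA
  set B : ℝ → ℝ := fun e => ∫ s in Set.Ioi e, Real.exp (-s) * g s with hB
  have hball : Metric.ball ε (Metric.isOpen_iff.mp hI ε hε).choose ⊆ I :=
    (Metric.isOpen_iff.mp hI ε hε).choose_spec.2
  have hδ : 0 < (Metric.isOpen_iff.mp hI ε hε).choose :=
    (Metric.isOpen_iff.mp hI ε hε).choose_spec.1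
  set δ := (Metric.isOpen_iff.mp hI ε hε).choose
  have hnhds : Metric.ball ε δ ∈ nhds ε := Metric.ball_mem_nhds ε hδ
  -- local formulas
  have hAeq : ∀ e ∈ Metric.ball ε δ, A e = A ε - ∫ t in ε..e, g t := fun e he =>
    ioi_split g hg (hint1 ε hε) (hint1 e (hball he))
  have hBeq : ∀ e ∈ Metric.ball ε δ,
      B e = B ε - ∫ t in ε..e, Real.exp (-t) * g t := fun e he =>
    ioi_split _ hgc2 (hint2 ε hε) (hint2 e (hball he))
  -- derivatives of A, B
  have hA' : HasDerivAt A (-(g ε)) ε := by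
    have h1 : HasDerivAt (fun e => A ε - ∫ t in ε..e, g t) (-(g ε)) ε := by
      have := (intervalIntegral.integral_hasDerivAt_right
        (hg.intervalIntegrable ε ε)
        (hg.stronglyMeasurableAtFilter _ _) hg.continuousAt)
      simpa [Pi.sub_def] using (hasDerivAt_const ε (A ε)).sub this
    exact h1.congr_of_eventuallyEq
      (Filter.eventually_of_mem hnhds fun e he => hAeq e he)
  have hB' : HasDerivAt B (-(Real.exp (-ε) * g ε)) ε := by
    have h1 : HasDerivAt (fun e => B ε - ∫ t in ε..e, Real.exp (-t) * g t)
        (-(Real.exp (-ε) * g ε)) ε := by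
      have := (intervalIntegral.integral_hasDerivAt_right
        (hgc2.intervalIntegrable ε ε)
        (hgc2.stronglyMeasurableAtFilter _ _) hgc2.continuousAt)
      simpa [Pi.sub_def] using (hasDerivAt_const ε (B ε)).sub this
    exact h1.congr_of_eventuallyEq
      (Filter.eventually_of_mem hnhds fun e he => hBeq e he)
  -- φ = A - exp · B locally
  have hφeq : ∀ e ∈ Metric.ball ε δ,
      (∫ s in Set.Ioi e, (1 - Real.exp (e - s)) * g s) = A e - Real.exp e * B e := by
    intro e he
    have h1 : IntegrableOn g (Set.Ioi e) := hint1 e (hball he)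
    have h2 : IntegrableOn (fun s => Real.exp e * (Real.exp (-s) * g s)) (Set.Ioi e) :=
      (hint2 e (hball he)).const_mul _
    have : (∫ s in Set.Ioi e, (1 - Real.exp (e - s)) * g s)
        = ∫ s in Set.Ioi e, (g s - Real.exp e * (Real.exp (-s) * g s)) := by
      apply setIntegral_congr_fun measurableSet_Ioi
      intro s _
      have : Real.exp (e - s) = Real.exp e * Real.exp (-s) := by
        rw [← Real.exp_add]; ring_nf
      simp only [this]; ring
    rw [this, integral_sub h1 h2, integral_const_mul]
  -- combine
  have hD : HasDerivAt (fun e => A e - Real.exp e * B e)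
      (-(g ε) - (Real.exp ε * (-(Real.exp (-ε) * g ε)) + Real.exp ε * B ε)) ε := by
    have hexp : HasDerivAt Real.exp (Real.exp ε) ε := Real.hasDerivAt_exp ε
    have := hexp.mul hB'
    exact hA'.sub (by simpa [Pi.mul_def, mul_comm, add_comm] using this)
  have hD2 : HasDerivAt (fun e => A e - Real.exp e * B e)
      (-(Real.exp ε * B ε)) ε := by
    convert hD using 1
    have : Real.exp ε * (Real.exp (-ε) * g ε) = g ε := by
      rw [← mul_assoc, ← Real.exp_add]; simp
    ring_nf
    ring_nf at this ⊢
    linarith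
  have htarget : (∫ s in Set.Ioi ε, Real.exp (ε - s) * g s) = Real.exp ε * B ε := by
    rw [hB, ← integral_const_mul]
    apply setIntegral_congr_fun measurableSet_Ioi
    intro s _
    show Real.exp (ε - s) * g s = Real.exp ε * (Real.exp (-s) * g s)
    rw [← mul_assoc, ← Real.exp_add]; ring_nf
  rw [htarget]
  exact hD2.congr_of_eventuallyEq
    (Filter.eventually_of_mem hnhds fun e he => hφeq e he)
end

section
/- Let σ > 0 and 0 < q < 1, and let ω be the privacy loss distribution density of the Poisson-subsampled Gaussian mechanism. Then for all s ∈ (log(1−q), ∞), ω(s) ≤ (σ/(q·√(2π)))·e^{1/σ²}. -/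
open MeasureTheory Real Set

/-- Density `f_X` of the Poisson-subsampled Gaussian mechanism:
`f(t) = (1/√(2πσ²))·(q e^{−(t−1)²/(2σ²)} + (1−q) e^{−t²/(2σ²)})`. -/
noncomputable def ffun (σ q : ℝ) (t : ℝ) : ℝ :=
  (1 / Real.sqrt (2 * Real.pi * σ ^ 2)) *
    (q * Real.exp (-(t - 1) ^ 2 / (2 * σ ^ 2)) + (1 - q) * Real.exp (-t ^ 2 / (2 * σ ^ 2)))

/-- Inverse privacy loss function `g(s) = σ²·log((e^s − (1−q))/q) + 1/2`. -/
noncomputable def gfun (σ q : ℝ) (s : ℝ) : ℝ :=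
  σ ^ 2 * Real.log ((Real.exp s - (1 - q)) / q) + 1 / 2

/-- Derivative `g'(s) = σ² e^s / (e^s − (1−q))`. -/
noncomputable def gderiv (σ q : ℝ) (s : ℝ) : ℝ :=
  σ ^ 2 * Real.exp s / (Real.exp s - (1 - q))

/-- Privacy loss distribution density of the Poisson-subsampled Gaussian mechanism:
`ω(s) = f(g(s))·g'(s)` for `s > log(1−q)` and `0` otherwise. -/
noncomputable def pld (σ q : ℝ) : ℝ → ℝ :=
  (Set.Ioi (Real.log (1 - q))).indicator (fun s => ffun σ q (gfun σ q s) * gderiv σ q s)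

/-- uniform bound for the PLD density of the Poisson-subsampled Gaussian
mechanism: `ω(s) ≤ (σ/(q√(2π))) e^{1/σ²}` for all `s > log(1−q)`. -/
theorem pld_uniform_bound
    (σ q : ℝ) (hσ : 0 < σ) (hq0 : 0 < q) (hq1 : q < 1) :
    ∀ s ∈ Set.Ioi (Real.log (1 - q)),
      pld σ q s ≤ σ / (q * Real.sqrt (2 * Real.pi)) * Real.exp (1 / σ ^ 2) := by
  intro s hs
  have hq' : (0:ℝ) < 1 - q := by linarith
  have hσ2 : (0:ℝ) < σ ^ 2 := by positivity
  have hπ : (0:ℝ) < 2 * Real.pi := by positivity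
  have hsq : (0:ℝ) < Real.sqrt (2 * Real.pi) := Real.sqrt_pos.mpr hπ
  have hEgt : 1 - q < Real.exp s := by
    have := Real.exp_lt_exp.mpr hs
    rwa [Real.exp_log hq'] at this
  have hA : (0:ℝ) < Real.exp s - (1 - q) := by linarith
  set E := Real.exp s with hEdef
  set A := E - (1 - q) with hAdef
  set t := gfun σ q s with htdef
  have hEpos : (0:ℝ) < E := Real.exp_pos s
  -- key exponential identity
  have hu : (2 * t - 1) / (2 * σ ^ 2) = Real.log (A / q) := by
    rw [htdef, gfun]
    field_simp
    rw [hAdef, hEdef]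
    ring
  have hexpu : Real.exp ((2 * t - 1) / (2 * σ ^ 2)) = A / q := by
    rw [hu, Real.exp_log (by positivity)]
  have hAq : A = q * Real.exp ((2 * t - 1) / (2 * σ ^ 2)) := by
    rw [hexpu]; field_simp
  -- rewrite ffun
  have hsqrt : Real.sqrt (2 * Real.pi * σ ^ 2) = Real.sqrt (2 * Real.pi) * σ := by
    rw [Real.sqrt_mul (le_of_lt hπ), Real.sqrt_sq hσ.le]
  have h1 : Real.exp (-(t - 1) ^ 2 / (2 * σ ^ 2))
      = Real.exp (-t ^ 2 / (2 * σ ^ 2)) * (A / q) := by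
    rw [← hexpu, ← Real.exp_add]
    congr 1
    field_simp
    ring
  have h2 : ffun σ q t
      = (1 / (Real.sqrt (2 * Real.pi) * σ)) * (E * Real.exp (-t ^ 2 / (2 * σ ^ 2))) := by
    rw [ffun, h1, hsqrt]
    have : q * (Real.exp (-t ^ 2 / (2 * σ ^ 2)) * (A / q))
        = A * Real.exp (-t ^ 2 / (2 * σ ^ 2)) := by
      field_simp
    rw [this]
    ring_nf
    rw [hAdef]; ring
  have h3 : Real.exp (-t ^ 2 / (2 * σ ^ 2))
      = Real.exp ((2 * t - 1) / (2 * σ ^ 2)) * Real.exp (-(t + 1) ^ 2 / (2 * σ ^ 2))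
        * Real.exp (1 / σ ^ 2) := by
    rw [← Real.exp_add, ← Real.exp_add]
    congr 1
    field_simp
    ring
  have hgd : gderiv σ q s = σ ^ 2 * E / A := by rw [gderiv]
  have key : ffun σ q t * gderiv σ q s
      = σ / (q * Real.sqrt (2 * Real.pi))
        * (E ^ 2 * Real.exp (-(t + 1) ^ 2 / (2 * σ ^ 2))) * Real.exp (1 / σ ^ 2) := by
    rw [h2, hgd, h3, hAq]
    have hex := Real.exp_pos ((2 * t - 1) / (2 * σ ^ 2))
    field_simp
  -- bound E² e^{-(t+1)²/(2σ²)} ≤ 1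
  have hx : E ≤ Real.exp ((t + 1) ^ 2 / (4 * σ ^ 2)) := by
    have hu_le : (2 * t - 1) / (2 * σ ^ 2) ≤ (t + 1) ^ 2 / (4 * σ ^ 2) := by
      rw [div_le_div_iff₀ (by positivity) (by positivity)]
      nlinarith [sq_nonneg (t - 1)]
    have hE_eq : E = q * Real.exp ((2 * t - 1) / (2 * σ ^ 2)) + (1 - q) := by
      rw [← hAq, hAdef]; ring
    have h1e : (1:ℝ) ≤ Real.exp ((t + 1) ^ 2 / (4 * σ ^ 2)) :=
      Real.one_le_exp (by positivity)
    have hu_le' := hu_le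
    calc E = q * Real.exp ((2 * t - 1) / (2 * σ ^ 2)) + (1 - q) := hE_eq
      _ ≤ q * Real.exp ((t + 1) ^ 2 / (4 * σ ^ 2))
          + (1 - q) * Real.exp ((t + 1) ^ 2 / (4 * σ ^ 2)) := by
          have e1 : Real.exp ((2 * t - 1) / (2 * σ ^ 2))
              ≤ Real.exp ((t + 1) ^ 2 / (4 * σ ^ 2)) := Real.exp_le_exp.mpr hu_le
          have e2 : (1 - q) ≤ (1 - q) * Real.exp ((t + 1) ^ 2 / (4 * σ ^ 2)) :=
            le_mul_of_one_le_right hq'.le h1e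
          have e3 : q * Real.exp ((2 * t - 1) / (2 * σ ^ 2))
              ≤ q * Real.exp ((t + 1) ^ 2 / (4 * σ ^ 2)) :=
            mul_le_mul_of_nonneg_left e1 hq0.le
          linarith
      _ = Real.exp ((t + 1) ^ 2 / (4 * σ ^ 2)) := by ring
  have hE2 : E ^ 2 ≤ Real.exp ((t + 1) ^ 2 / (2 * σ ^ 2)) := by
    have := mul_le_mul hx hx hEpos.le (Real.exp_pos _).le
    calc E ^ 2 = E * E := sq E
      _ ≤ Real.exp ((t + 1) ^ 2 / (4 * σ ^ 2)) * Real.exp ((t + 1) ^ 2 / (4 * σ ^ 2)) := this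
      _ = Real.exp ((t + 1) ^ 2 / (2 * σ ^ 2)) := by
          rw [← Real.exp_add]; congr 1; field_simp; ring
  have hbound : E ^ 2 * Real.exp (-(t + 1) ^ 2 / (2 * σ ^ 2)) ≤ 1 := by
    have h := mul_le_mul_of_nonneg_right hE2 (Real.exp_pos (-(t + 1) ^ 2 / (2 * σ ^ 2))).le
    calc E ^ 2 * Real.exp (-(t + 1) ^ 2 / (2 * σ ^ 2))
        ≤ Real.exp ((t + 1) ^ 2 / (2 * σ ^ 2)) * Real.exp (-(t + 1) ^ 2 / (2 * σ ^ 2)) := h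
      _ = 1 := by
          rw [← Real.exp_add,
            show (t + 1) ^ 2 / (2 * σ ^ 2) + -(t + 1) ^ 2 / (2 * σ ^ 2) = 0 by ring,
            Real.exp_zero]
  -- conclude
  rw [pld, Set.indicator_of_mem hs, key]
  have hc : (0:ℝ) < σ / (q * Real.sqrt (2 * Real.pi)) := by positivity
  calc σ / (q * Real.sqrt (2 * Real.pi))
        * (E ^ 2 * Real.exp (-(t + 1) ^ 2 / (2 * σ ^ 2))) * Real.exp (1 / σ ^ 2)
      ≤ σ / (q * Real.sqrt (2 * Real.pi)) * 1 * Real.exp (1 / σ ^ 2) := by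
        gcongr
      _ = σ / (q * Real.sqrt (2 * Real.pi)) * Real.exp (1 / σ ^ 2) := by ring
end

section
/- Let σ > 0 and 0 < q ≤ 1/2, and let ω be the privacy loss distribution density of the Poisson-subsampled Gaussian mechanism. Then for all s ≥ 1, ω(s) ≤ σ·e^{ −(σ²s + C)²/(2σ²) }, where C = σ²·log(1/(2q)) − 1/2. -/
open MeasureTheory Real Set

/-!
Completing the square gives `e^{-(t-1)²/(2σ²)} = e^{-t²/(2σ²)} e^{(2t-1)/(2σ²)}`, and at `t = g(s)`
the last factor is `(e^s - (1-q))/q`; hence `f(g(s)) = e^s φ(g(s))` with `φ` the centred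
Gaussian density of variance `σ²`. For `s ≥ 1` we have `e^s ≥ 2(1-q)`, so `g'(s) ≤ 2σ²` and
`g(s) ≥ B := σ²(s + log(1/(2q))) + 1/2 ≥ 0`. The same square completion at `t = B` turns
`e^s φ(B)` into `2q φ(B - 1)`, and `4qσ² / √(2πσ²) ≤ σ` because `√(2π) ≥ 2`.
-/

lemma exp_neg_sub_one_sq_div {σ : ℝ} (hσ : σ ≠ 0) (t : ℝ) :
    exp (-(t - 1) ^ 2 / (2 * σ ^ 2)) =
      exp (-t ^ 2 / (2 * σ ^ 2)) * exp ((2 * t - 1) / (2 * σ ^ 2)) := by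
  rw [← exp_add]
  congr 1
  field_simp
  ring

lemma two_mul_le_sqrt_two_pi_mul_sq {σ : ℝ} (hσ : 0 ≤ σ) : 2 * σ ≤ √(2 * π * σ ^ 2) := by
  rw [le_sqrt (by positivity) (by positivity)]
  nlinarith [pi_gt_three, sq_nonneg σ]

section PoissonSubsampledGaussian

variable {σ q s : ℝ}

lemma exp_two_mul_gfun_sub_one_div (hσ : σ ≠ 0) (hq : 0 < q) (hs : 1 - q < exp s) :
    exp ((2 * gfun σ q s - 1) / (2 * σ ^ 2)) = (exp s - (1 - q)) / q := by
  have hexponent : (2 * gfun σ q s - 1) / (2 * σ ^ 2) = log ((exp s - (1 - q)) / q) := by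
    rw [gfun]
    field_simp
    ring
  rw [hexponent, exp_log (div_pos (sub_pos.2 hs) hq)]

lemma ffun_gfun (hσ : σ ≠ 0) (hq : 0 < q) (hs : 1 - q < exp s) :
    ffun σ q (gfun σ q s) =
      exp (-gfun σ q s ^ 2 / (2 * σ ^ 2)) * exp s / √(2 * π * σ ^ 2) := by
  rw [ffun, exp_neg_sub_one_sq_div hσ, exp_two_mul_gfun_sub_one_div hσ hq hs]
  field_simp
  ring

lemma gderiv_nonneg (hs : 1 - q < exp s) : 0 ≤ gderiv σ q s := by
  have := sub_pos.2 hs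
  unfold gderiv
  positivity

lemma gderiv_le (hs : 2 * (1 - q) ≤ exp s) : gderiv σ q s ≤ 2 * σ ^ 2 := by
  have hE := exp_pos s
  rw [gderiv, div_le_iff₀ (by linarith)]
  nlinarith [mul_nonneg (sq_nonneg σ) (sub_nonneg.2 hs)]

lemma le_gfun (hq : 0 < q) (hs : 2 * (1 - q) ≤ exp s) :
    σ ^ 2 * (s + log (1 / (2 * q))) + 1 / 2 ≤ gfun σ q s := by
  have hE := exp_pos s
  have hlog : s + log (1 / (2 * q)) = log (exp s / (2 * q)) := by
    rw [log_div hE.ne' (by positivity), log_exp, one_div, log_inv, sub_eq_add_neg]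
  have hratio : exp s / (2 * q) ≤ (exp s - (1 - q)) / q := by
    rw [div_le_div_iff₀ (by positivity) hq]
    nlinarith
  rw [gfun, hlog]
  gcongr

end PoissonSubsampledGaussian

/-- tail bound for the PLD density of the Poisson-subsampled Gaussian
mechanism: for `0 < q ≤ 1/2` and `s ≥ 1`,
`ω(s) ≤ σ e^{−(σ²s + C)²/(2σ²)}` with `C = σ² log(1/(2q)) − 1/2`. -/
theorem pld_tail_bound
    (σ q : ℝ) (hσ : 0 < σ) (hq0 : 0 < q) (hq : q ≤ 1 / 2) :
    ∀ s : ℝ, 1 ≤ s →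
      pld σ q s ≤ σ *
        Real.exp (-(σ ^ 2 * s + (σ ^ 2 * Real.log (1 / (2 * q)) - 1 / 2)) ^ 2 /
          (2 * σ ^ 2)) := by
  intro s hs
  have hE : 2 * (1 - q) ≤ exp s := by linarith [add_one_le_exp s]
  have hE' : 1 - q < exp s := by linarith
  set B := σ ^ 2 * (s + log (1 / (2 * q))) + 1 / 2
  have hB : 0 ≤ B := by
    have : 0 ≤ log (1 / (2 * q)) := log_nonneg (by rw [le_div_iff₀ (by positivity)]; linarith)
    positivity
  have hshift : exp (-B ^ 2 / (2 * σ ^ 2)) * exp s = 2 * q * exp (-(B - 1) ^ 2 / (2 * σ ^ 2)) := by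
    rw [exp_neg_sub_one_sq_div hσ.ne', show (2 * B - 1) / (2 * σ ^ 2) = s + log (1 / (2 * q)) by
      field_simp; ring, exp_add, exp_log (by positivity)]
    field_simp
  have hroot := two_mul_le_sqrt_two_pi_mul_sq hσ.le
  rw [pld, indicator_of_mem (mem_Ioi.2 ((log_lt_iff_lt_exp (by linarith)).2 hE')), ffun_gfun hσ.ne' hq0 hE',
    show σ ^ 2 * s + (σ ^ 2 * log (1 / (2 * q)) - 1 / 2) = B - 1 by ring]
  calc exp (-gfun σ q s ^ 2 / (2 * σ ^ 2)) * exp s / √(2 * π * σ ^ 2) * gderiv σ q s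
      ≤ exp (-B ^ 2 / (2 * σ ^ 2)) * exp s / √(2 * π * σ ^ 2) * (2 * σ ^ 2) := by
        gcongr
        · exact gderiv_nonneg hE'
        · exact le_gfun hq0 hE
        · exact gderiv_le hE
    _ = 4 * q * σ ^ 2 / √(2 * π * σ ^ 2) * exp (-(B - 1) ^ 2 / (2 * σ ^ 2)) := by
        rw [hshift]; ring
    _ ≤ σ * exp (-(B - 1) ^ 2 / (2 * σ ^ 2)) := by
        gcongr
        rw [div_le_iff₀ (by linarith)]
        nlinarith
end
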